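/- arXiv:1909.10206 — 2 statements merged into one kernel-verified Lean document; each statement's English description precedes it below -/
import Mathlib

section
/- Let (e,f) be a q-ary GCP of length M and υ₁, υ₂, υ ∈ ℤ_q (q even) with υ₁ - υ₂ ≡ 0 or q/2 (mod q). Then the pair a = [ω^{υ₁}·e, ω^{υ₁+υ}·f], b = [ω^{υ₂}·e, -ω^{υ₂+υ}·f] of length N = 2M is a perfect (N, N/2)-CZCP, i.e., ρ(a)(τ)+ρ(b)(τ)=0 for all 1 ≤ τ ≤ N-1 and ρ(a,b)(τ)+ρ(b,a)(τ)=0 for all N/2 ≤ τ ≤ N-1. -/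
open Finset

/-- Aperiodic cross-correlation of length-`N` complex sequences at shift `τ`. -/
noncomputable def rho (N : ℕ) (a b : ℕ → ℂ) (τ : ℕ) : ℂ :=
  ∑ n ∈ Finset.range (N - τ), a n * (starRingEnd ℂ) (b (n + τ))

/-!
Write `A = [c₁ e, d₁ f]` and `B = [c₂ e, -d₂ f]` with unimodular `cᵢ, dᵢ`. Splitting the sum
defining the correlation of two concatenations of length-`M` blocks at the block boundary, a
shift `τ < M` contributes the correlations of the blocks with each other plus a "wrap-around"
term coupling the second block with the first, and a shift `τ ≥ M` only couples the first block
of one sequence with the second block of the other. The sign flip in `B` makes all coupling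
terms cancel as soon as `c₁ d̄₁ = c₂ d̄₂` (for the autocorrelations) and `c₁ d̄₂ = c₂ d̄₁` (for the
cross-correlations). For `cᵢ = ω^{υᵢ}`, `dᵢ = ω^{υᵢ+υ}` the first identity is automatic and the
second says `ω^{2(υ₁-υ₂)} = 1`, which is exactly the hypothesis `υ₁ - υ₂ ≡ 0, q/2 (mod q)`.
-/

open ComplexConjugate

def seqAppend (M : ℕ) (x y : ℕ → ℂ) : ℕ → ℂ :=
  fun n => if n < M then x n else y (n - M)

section Correlation

variable {M τ : ℕ}

lemma rho_const_mul (N : ℕ) (c d : ℂ) (x y : ℕ → ℂ) :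
    rho N (fun n => c * x n) (fun n => d * y n) τ = c * conj d * rho N x y τ := by
  simp only [rho, mul_sum, map_mul]
  exact sum_congr rfl fun _ _ => by ring

lemma rho_seqAppend_of_lt (hτ : τ < M) (x y x' y' : ℕ → ℂ) :
    rho (2 * M) (seqAppend M x y) (seqAppend M x' y') τ =
      rho M x x' τ + rho M y y' τ + conj (rho M y' x (M - τ)) := by
  have hlen : 2 * M - τ = (M - τ) + τ + (M - τ) := by omega
  rw [rho, hlen, sum_range_add, sum_range_add, add_right_comm]
  congr 1
  · congr 1
    · refine sum_congr rfl fun n hn => ?_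
      have hn := mem_range.mp hn
      simp only [seqAppend, if_pos (show n < M by omega), if_pos (show n + τ < M by omega)]
    · rw [rho]
      refine sum_congr rfl fun n hn => ?_
      simp only [seqAppend, if_neg (show ¬M - τ + τ + n < M by omega),
        if_neg (show ¬M - τ + τ + n + τ < M by omega),
        show M - τ + τ + n - M = n by omega, show M - τ + τ + n + τ - M = n + τ by omega]
  · rw [rho, show M - (M - τ) = τ by omega, map_sum]
    refine sum_congr rfl fun n hn => ?_
    have hn := mem_range.mp hn
    simp only [seqAppend, if_pos (show M - τ + n < M by omega),
      if_neg (show ¬M - τ + n + τ < M by omega), map_mul, Complex.conj_conj,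
      show M - τ + n + τ - M = n by omega, add_comm n (M - τ), mul_comm]

lemma rho_seqAppend_of_le (hτ : M ≤ τ) (x y x' y' : ℕ → ℂ) :
    rho (2 * M) (seqAppend M x y) (seqAppend M x' y') τ = rho M x y' (τ - M) := by
  rw [rho, rho, show M - (τ - M) = 2 * M - τ by omega]
  refine sum_congr rfl fun n hn => ?_
  have hn := mem_range.mp hn
  simp only [seqAppend, if_pos (show n < M by omega), if_neg (show ¬n + τ < M by omega),
    show n + τ - M = n + (τ - M) by omega]

end Correlation

section PairConstruction

variable {M τ : ℕ} {e f : ℕ → ℂ} {c₁ c₂ d₁ d₂ : ℂ}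

lemma rho_add_rho_seqAppend_of_lt (hτ : τ < M) (hc₁ : ‖c₁‖ = 1) (hc₂ : ‖c₂‖ = 1)
    (hd₁ : ‖d₁‖ = 1) (hd₂ : ‖d₂‖ = 1) (h : c₁ * conj d₁ = c₂ * conj d₂) :
    let A := seqAppend M (fun n => c₁ * e n) (fun n => d₁ * f n)
    let B := seqAppend M (fun n => c₂ * e n) (fun n => -d₂ * f n)
    rho (2 * M) A A τ + rho (2 * M) B B τ = 2 * (rho M e e τ + rho M f f τ) := by
  intro A B
  have h' : d₁ * conj c₁ = d₂ * conj c₂ := by simpa [mul_comm] using congrArg conj h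
  simp only [A, B, rho_seqAppend_of_lt hτ, rho_const_mul, map_neg, neg_mul_neg,
    Complex.mul_conj', hc₁, hc₂, hd₁, hd₂, map_mul, h']
  push_cast
  ring

lemma rho_add_rho_seqAppend_of_le (hτ : M ≤ τ) (h : c₁ * conj d₁ = c₂ * conj d₂) :
    let A := seqAppend M (fun n => c₁ * e n) (fun n => d₁ * f n)
    let B := seqAppend M (fun n => c₂ * e n) (fun n => -d₂ * f n)
    rho (2 * M) A A τ + rho (2 * M) B B τ = 0 := by
  intro A B
  simp only [A, B, rho_seqAppend_of_le hτ, rho_const_mul, map_neg]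
  linear_combination rho M e f (τ - M) * h

lemma rho_add_rho_swap_seqAppend_of_le (hτ : M ≤ τ) (h : c₁ * conj d₂ = c₂ * conj d₁) :
    let A := seqAppend M (fun n => c₁ * e n) (fun n => d₁ * f n)
    let B := seqAppend M (fun n => c₂ * e n) (fun n => -d₂ * f n)
    rho (2 * M) A B τ + rho (2 * M) B A τ = 0 := by
  intro A B
  simp only [A, B, rho_seqAppend_of_le hτ, rho_const_mul, map_neg]
  linear_combination -rho M e f (τ - M) * h

end PairConstruction

lemma Complex.zpow_mul_conj_zpow {z : ℂ} (hz : ‖z‖ = 1) (j k : ℤ) :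
    z ^ j * conj (z ^ k) = z ^ (j - k) := by
  have hz0 : z ≠ 0 := norm_ne_zero_iff.mp (by rw [hz]; exact one_ne_zero)
  rw [map_zpow₀, ← Complex.inv_eq_conj hz, inv_zpow', ← zpow_add₀ hz0, sub_eq_add_neg]

lemma Complex.norm_exp_two_pi_I_div (q : ℕ) : ‖Complex.exp (2 * Real.pi * Complex.I / q)‖ = 1 := by
  rw [show 2 * Real.pi * Complex.I / q = ((2 * Real.pi / q : ℝ) : ℂ) * Complex.I by
    push_cast; ring]
  exact Complex.norm_exp_ofReal_mul_I _

lemma Complex.exp_two_pi_I_div_pow_self (q : ℕ) :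
    Complex.exp (2 * Real.pi * Complex.I / q) ^ q = 1 := by
  rcases eq_or_ne q 0 with rfl | hq
  · exact pow_zero _
  · exact (Complex.isPrimitiveRoot_exp q hq).pow_eq_one

lemma Int.dvd_two_mul_of_emod_eq_zero_or_half {q : ℕ} (hq : Even q) {d : ℤ}
    (hd : d % q = 0 ∨ d % q = (q : ℤ) / 2) : (q : ℤ) ∣ 2 * d := by
  obtain ⟨r, rfl⟩ := hq
  have hdiv := Int.mul_ediv_add_emod d ((r + r : ℕ) : ℤ)
  push_cast at hd hdiv ⊢
  rcases hd with h | h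
  · exact ⟨2 * (d / (r + r)), by rw [h] at hdiv; linear_combination -2 * hdiv⟩
  · rw [show ((r : ℤ) + r) / 2 = r by omega] at h
    exact ⟨2 * (d / (r + r)) + 1, by rw [h] at hdiv; linear_combination -2 * hdiv⟩

theorem stmt11_general (q M : ℕ) (hq : Even q)
    (e f : ℕ → ℂ)
    (hGCP : ∀ τ, 1 ≤ τ → τ ≤ M - 1 → rho M e e τ + rho M f f τ = 0)
    (υ1 υ2 υ : ℤ)
    (hυ : (υ1 - υ2) % (q : ℤ) = 0 ∨ (υ1 - υ2) % (q : ℤ) = (q : ℤ) / 2)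
    (a b : ℕ → ℂ)
    (hadef : a = fun n => if n < M then Complex.exp (2 * Real.pi * Complex.I / q) ^ υ1 * e n
                  else Complex.exp (2 * Real.pi * Complex.I / q) ^ (υ1 + υ) * f (n - M))
    (hbdef : b = fun n => if n < M then Complex.exp (2 * Real.pi * Complex.I / q) ^ υ2 * e n
                  else -(Complex.exp (2 * Real.pi * Complex.I / q) ^ (υ2 + υ) * f (n - M))) :
    (∀ τ, 1 ≤ τ → τ ≤ 2 * M - 1 →
      rho (2 * M) a a τ + rho (2 * M) b b τ = 0) ∧
    (∀ τ, M ≤ τ → τ ≤ 2 * M - 1 →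
      rho (2 * M) a b τ + rho (2 * M) b a τ = 0) := by
  set ω := Complex.exp (2 * Real.pi * Complex.I / q)
  have hω : ‖ω‖ = 1 := Complex.norm_exp_two_pi_I_div q
  have hnorm (k : ℤ) : ‖ω ^ k‖ = 1 := by rw [norm_zpow, hω, one_zpow]
  have hauto : ω ^ υ1 * conj (ω ^ (υ1 + υ)) = ω ^ υ2 * conj (ω ^ (υ2 + υ)) := by
    rw [Complex.zpow_mul_conj_zpow hω, Complex.zpow_mul_conj_zpow hω]
    ring_nf
  have hcross : ω ^ υ1 * conj (ω ^ (υ2 + υ)) = ω ^ υ2 * conj (ω ^ (υ1 + υ)) := by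
    obtain ⟨t, ht⟩ := Int.dvd_two_mul_of_emod_eq_zero_or_half hq hυ
    have hω0 : ω ≠ 0 := Complex.exp_ne_zero _
    calc ω ^ υ1 * conj (ω ^ (υ2 + υ)) = ω ^ (υ2 - (υ1 + υ)) * (ω ^ (q : ℤ)) ^ t := by
          rw [Complex.zpow_mul_conj_zpow hω, ← zpow_mul, ← ht, ← zpow_add₀ hω0]
          ring_nf
      _ = ω ^ υ2 * conj (ω ^ (υ1 + υ)) := by
          rw [zpow_natCast, Complex.exp_two_pi_I_div_pow_self, one_zpow, mul_one,
            Complex.zpow_mul_conj_zpow hω]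
  have ha : a = seqAppend M (fun n => ω ^ υ1 * e n) (fun n => ω ^ (υ1 + υ) * f n) := hadef
  have hb : b = seqAppend M (fun n => ω ^ υ2 * e n) (fun n => -ω ^ (υ2 + υ) * f n) := by
    simp only [hbdef, neg_mul]
    rfl
  rw [ha, hb]
  refine ⟨fun τ hτ1 hτ2 => ?_, fun τ hτM _ => rho_add_rho_swap_seqAppend_of_le hτM hcross⟩
  rcases lt_or_ge τ M with hτM | hτM
  · rw [rho_add_rho_seqAppend_of_lt hτM (hnorm _) (hnorm _) (hnorm _) (hnorm _) hauto,
      hGCP τ hτ1 (by omega), mul_zero]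
  · exact rho_add_rho_seqAppend_of_le hτM hauto

/-- From a q-ary GCP (e,f) of length M (q even), υ₁-υ₂ ≡ 0 or q/2 (mod q), the pair
a = [ω^{υ₁}e, ω^{υ₁+υ}f], b = [ω^{υ₂}e, -ω^{υ₂+υ}f] of length N = 2M is a perfect
(N, N/2)-CZCP. -/
theorem stmt11 (q M : ℕ) (hq : Even q) (hq0 : 0 < q)
    (e f : ℕ → ℂ)
    (he : ∀ n < M, (e n) ^ q = 1) (hf : ∀ n < M, (f n) ^ q = 1)
    (hGCP : ∀ τ, 1 ≤ τ → τ ≤ M - 1 → rho M e e τ + rho M f f τ = 0)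
    (υ1 υ2 υ : ℤ)
    (hυ : (υ1 - υ2) % (q : ℤ) = 0 ∨ (υ1 - υ2) % (q : ℤ) = (q : ℤ) / 2)
    (a b : ℕ → ℂ)
    (hadef : a = fun n => if n < M then Complex.exp (2 * Real.pi * Complex.I / q) ^ υ1 * e n
                  else Complex.exp (2 * Real.pi * Complex.I / q) ^ (υ1 + υ) * f (n - M))
    (hbdef : b = fun n => if n < M then Complex.exp (2 * Real.pi * Complex.I / q) ^ υ2 * e n
                  else -(Complex.exp (2 * Real.pi * Complex.I / q) ^ (υ2 + υ) * f (n - M))) :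
    (∀ τ, 1 ≤ τ → τ ≤ 2 * M - 1 →
      rho (2 * M) a a τ + rho (2 * M) b b τ = 0) ∧
    (∀ τ, M ≤ τ → τ ≤ 2 * M - 1 →
      rho (2 * M) a b τ + rho (2 * M) b a τ = 0) :=
  stmt11_general q M hq e f hGCP υ1 υ2 υ hυ a b hadef hbdef
end

section
/- Let (a,b) be a unimodular (N,Z)-CZCP satisfying a_i = b_i and a_{N-1-i} = -b_{N-1-i} for all i ∈ {0,...,Z-1}. Then ρ(b, reverse(b*))(N-τ) + ρ(a, -reverse(a*))(N-τ) = 0 for all τ with 1 ≤ τ ≤ Z. -/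
open Finset

theorem rho_neg_right (N : ℕ) (x y : ℕ → ℂ) (τ : ℕ) :
    rho N x (fun n => -y n) τ = -rho N x y τ := by
  simp only [rho, map_neg, mul_neg, sum_neg_distrib]

theorem rho_congr {N τ : ℕ} {x x' y y' : ℕ → ℂ}
    (hx : ∀ n < N - τ, x n = x' n) (hy : ∀ n < N - τ, y (n + τ) = y' (n + τ)) :
    rho N x y τ = rho N x' y' τ :=
  sum_congr rfl fun n hn => by rw [hx n (mem_range.1 hn), hy n (mem_range.1 hn)]

theorem stmt13_general (N Z : ℕ) (a b : ℕ → ℂ)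
    (hid : ∀ i < Z, a i = b i ∧ a (N - 1 - i) = -b (N - 1 - i)) :
    ∀ τ, 1 ≤ τ → τ ≤ Z →
      rho N b (fun n => (starRingEnd ℂ) (b (N - 1 - n))) (N - τ)
      + rho N a (fun n => -(starRingEnd ℂ) (a (N - 1 - n))) (N - τ) = 0 := by
  intro τ _ hτZ
  -- At shift `N - τ` only the entries of index `< τ ≤ Z` meet, and there `a = b`.
  have hab : rho N a (fun n => (starRingEnd ℂ) (a (N - 1 - n))) (N - τ)
      = rho N b (fun n => (starRingEnd ℂ) (b (N - 1 - n))) (N - τ) :=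
    rho_congr (fun n hn => (hid n (by omega)).1)
      (fun n hn => by rw [(hid (N - 1 - (n + (N - τ))) (by omega)).1])
  rw [rho_neg_right, hab, add_neg_cancel]

/-- For a unimodular (N,Z)-CZCP (a,b) with a_i = b_i and a_{N-1-i} = -b_{N-1-i} for
all i < Z, we have ρ(b, reverse(b*))(N-τ) + ρ(a, -reverse(a*))(N-τ) = 0 for 1 ≤ τ ≤ Z. -/
theorem stmt13 (N Z : ℕ) (a b : ℕ → ℂ)
    (ha : ∀ n < N, ‖a n‖ = 1) (hb : ∀ n < N, ‖b n‖ = 1)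
    (hC1 : ∀ τ, (1 ≤ τ ∧ τ ≤ Z) ∨ (N - Z ≤ τ ∧ τ ≤ N - 1) →
      rho N a a τ + rho N b b τ = 0)
    (hC2 : ∀ τ, N - Z ≤ τ → τ ≤ N - 1 → rho N a b τ + rho N b a τ = 0)
    (hid : ∀ i < Z, a i = b i ∧ a (N - 1 - i) = -b (N - 1 - i)) :
    ∀ τ, 1 ≤ τ → τ ≤ Z →
      rho N b (fun n => (starRingEnd ℂ) (b (N - 1 - n))) (N - τ)
      + rho N a (fun n => -(starRingEnd ℂ) (a (N - 1 - n))) (N - τ) = 0 :=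
  stmt13_general N Z a b hid
end
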